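/- arXiv:2507.15657 — 2 statements merged into one kernel-verified Lean document; each statement's English description precedes it below -/
import Mathlib

section
/- For each 0 ≤ k ≤ n−1, applying the Beltrami operator k times to w = Σ_{j=0}^{n-1} (z*)^j w_j (where each w_j solves ∂w_j/∂z* = μ ∂w_j/∂z with μ constant or smooth) yields (∂/∂z* − μ∂/∂z)^k w = Σ_{j=k}^{n-1} (j!/(j−k)!) (z*)^{j−k} w_j. -/
open Complex MeasureTheory Metric Set Filter

noncomputable section

/-- The bicomplex numbers: `z₁ + j z₂` with `z₁, z₂ ∈ ℂ`, `j² = -1`. -/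
structure Bicomplex where
  z1 : ℂ
  z2 : ℂ

namespace Bicomplex

@[ext] theorem ext' {u v : Bicomplex} (h1 : u.z1 = v.z1) (h2 : u.z2 = v.z2) : u = v := by
  cases u; cases v; simp_all

instance : Add Bicomplex := ⟨fun u v => ⟨u.z1 + v.z1, u.z2 + v.z2⟩⟩
instance : Mul Bicomplex := ⟨fun u v => ⟨u.z1 * v.z1 - u.z2 * v.z2, u.z1 * v.z2 + u.z2 * v.z1⟩⟩
instance : Zero Bicomplex := ⟨⟨0, 0⟩⟩
instance : One Bicomplex := ⟨⟨1, 0⟩⟩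
instance : Neg Bicomplex := ⟨fun u => ⟨-u.z1, -u.z2⟩⟩

@[simp] theorem add_z1 (u v : Bicomplex) : (u + v).z1 = u.z1 + v.z1 := rfl
@[simp] theorem add_z2 (u v : Bicomplex) : (u + v).z2 = u.z2 + v.z2 := rfl
@[simp] theorem mul_z1 (u v : Bicomplex) : (u * v).z1 = u.z1 * v.z1 - u.z2 * v.z2 := rfl
@[simp] theorem mul_z2 (u v : Bicomplex) : (u * v).z2 = u.z1 * v.z2 + u.z2 * v.z1 := rfl
@[simp] theorem zero_z1 : (0 : Bicomplex).z1 = 0 := rfl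
@[simp] theorem zero_z2 : (0 : Bicomplex).z2 = 0 := rfl
@[simp] theorem one_z1 : (1 : Bicomplex).z1 = 1 := rfl
@[simp] theorem one_z2 : (1 : Bicomplex).z2 = 0 := rfl
@[simp] theorem neg_z1 (u : Bicomplex) : (-u).z1 = -u.z1 := rfl
@[simp] theorem neg_z2 (u : Bicomplex) : (-u).z2 = -u.z2 := rfl

instance : CommRing Bicomplex where
  add := (· + ·)
  add_assoc := by intros; ext <;> simp <;> ring
  zero := 0
  zero_add := by intros; ext <;> simp
  add_zero := by intros; ext <;> simp
  add_comm := by intros; ext <;> simp <;> ring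
  mul := (· * ·)
  mul_assoc := by intros; ext <;> simp <;> ring
  one := 1
  one_mul := by intros; ext <;> simp
  mul_one := by intros; ext <;> simp
  left_distrib := by intros; ext <;> simp <;> ring
  right_distrib := by intros; ext <;> simp <;> ring
  zero_mul := by intros; ext <;> simp
  mul_zero := by intros; ext <;> simp
  neg := Neg.neg
  neg_add_cancel := by intros; ext <;> simp
  mul_comm := by intros; ext <;> simp <;> ring
  nsmul := nsmulRec
  zsmul := zsmulRec

/-- The bicomplex imaginary unit `j`. -/
def j : Bicomplex := ⟨0, 1⟩

/-- Embedding of `ℂ` into the bicomplex numbers. -/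
def ofC (z : ℂ) : Bicomplex := ⟨z, 0⟩

/-- The idempotent `p⁺ = (1 + j i)/2`. -/
def pp : Bicomplex := ⟨1 / 2, Complex.I / 2⟩

/-- The idempotent `p⁻ = (1 - j i)/2`. -/
def pm : Bicomplex := ⟨1 / 2, -(Complex.I / 2)⟩

/-- Idempotent component `w⁺ = z₁ - i z₂`. -/
def plus (w : Bicomplex) : ℂ := w.z1 - Complex.I * w.z2

/-- Idempotent component `w⁻ = z₁ + i z₂`. -/
def minus (w : Bicomplex) : ℂ := w.z1 + Complex.I * w.z2

/-- Bicomplex conjugation `z₁ + j z₂ ↦ z₁ - j z₂`. -/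
def bconj (w : Bicomplex) : Bicomplex := ⟨w.z1, -w.z2⟩

/-- The bicomplex norm `‖w‖_𝔹 = sqrt((|w⁺|² + |w⁻|²)/2)`. -/
def bnorm (w : Bicomplex) : ℝ :=
  Real.sqrt ((‖plus w‖ ^ 2 + ‖minus w‖ ^ 2) / 2)

/-- The bicomplexification `ẑ* = x - j y` of `z* = x - i y` for `z = x + i y`. -/
def hatStar (z : ℂ) : Bicomplex := ⟨(z.re : ℂ), -(z.im : ℂ)⟩

/-- Complex Wirtinger derivative `∂f/∂z`. -/
def wz (f : ℂ → ℂ) (z : ℂ) : ℂ :=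
  (fderiv ℝ f z 1 - Complex.I * fderiv ℝ f z Complex.I) / 2

/-- Complex Wirtinger derivative `∂f/∂z*`. -/
def wzbar (f : ℂ → ℂ) (z : ℂ) : ℂ :=
  (fderiv ℝ f z 1 + Complex.I * fderiv ℝ f z Complex.I) / 2

/-- Partial derivative in `x` of a bicomplex-valued function. -/
def dx (f : ℂ → Bicomplex) (z : ℂ) : Bicomplex :=
  ⟨fderiv ℝ (fun t => (f t).z1) z 1, fderiv ℝ (fun t => (f t).z2) z 1⟩

/-- Partial derivative in `y` of a bicomplex-valued function. -/
def dy (f : ℂ → Bicomplex) (z : ℂ) : Bicomplex :=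
  ⟨fderiv ℝ (fun t => (f t).z1) z Complex.I, fderiv ℝ (fun t => (f t).z2) z Complex.I⟩

/-- The bicomplex operator `∂ = (1/2)(∂ₓ - j ∂_y)`. -/
def bd (f : ℂ → Bicomplex) (z : ℂ) : Bicomplex := ofC (1 / 2) * (dx f z - j * dy f z)

/-- The bicomplex operator `∂̄ = (1/2)(∂ₓ + j ∂_y)`. -/
def bdbar (f : ℂ → Bicomplex) (z : ℂ) : Bicomplex := ofC (1 / 2) * (dx f z + j * dy f z)

/-- Real differentiability of a bicomplex-valued function at a point. -/
def BDiffAt (f : ℂ → Bicomplex) (z : ℂ) : Prop :=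
  DifferentiableAt ℝ (fun t => (f t).z1) z ∧ DifferentiableAt ℝ (fun t => (f t).z2) z

/-- `C^n`-smoothness of a bicomplex-valued function on a set. -/
def BContDiffOn (n : ℕ∞) (f : ℂ → Bicomplex) (s : Set ℂ) : Prop :=
  ContDiffOn ℝ n (fun t => (f t).z1) s ∧ ContDiffOn ℝ n (fun t => (f t).z2) s


/-- The point `r e^{iθ}` in the disk. -/
def circleAt (r θ : ℝ) : ℂ := (r : ℂ) * Complex.exp (θ * Complex.I)

/-- Finiteness of the Hardy norm for a complex-valued function on the disk. -/
def HardyBddC (p : ℝ) (f : ℂ → ℂ) : Prop :=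
  ∃ M : ℝ, ∀ r ∈ Set.Ioo (0:ℝ) 1,
    (∫ θ in (0:ℝ)..(2 * Real.pi), ‖f (circleAt r θ)‖ ^ p) ≤ M

/-- Finiteness of the Hardy norm for a bicomplex-valued function on the disk. -/
def HardyBddB (p : ℝ) (f : ℂ → Bicomplex) : Prop :=
  ∃ M : ℝ, ∀ r ∈ Set.Ioo (0:ℝ) 1,
    (∫ θ in (0:ℝ)..(2 * Real.pi), bnorm (f (circleAt r θ)) ^ p) ≤ M

/-- The bicomplex function `p⁺ w⁺ + p⁻ w⁻` built from complex components. -/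
def idem (wp wm : ℂ → ℂ) : ℂ → Bicomplex := fun t => pp * ofC (wp t) + pm * ofC (wm t)

/-- The complex Beltrami operator `∂/∂z* - μ ∂/∂z`. -/
def belOp (μ : ℂ → ℂ) (f : ℂ → ℂ) : ℂ → ℂ := fun z => wzbar f z - μ z * wz f z

/-- The bicomplex Beltrami operator `∂̄ - μ ∂`. -/
def bbelOp (μ : ℂ → Bicomplex) (f : ℂ → Bicomplex) : ℂ → Bicomplex :=
  fun z => bdbar f z - μ z * bd f z

/-- A Stolz (nontangential approach) region at a boundary point `ζ` with aperture `a`. -/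
def stolz (ζ : ℂ) (a : ℝ) : Set ℂ :=
  {z : ℂ | ‖z‖ < 1 ∧ ‖z - ζ‖ < a * (1 - ‖z‖)}

/-- Nontangential limit of a complex-valued function at a boundary point. -/
def NTLimC (f : ℂ → ℂ) (ζ L : ℂ) : Prop :=
  ∀ a : ℝ, 1 < a → Filter.Tendsto f (nhdsWithin ζ (stolz ζ a)) (nhds L)

/-- Nontangential limit of a bicomplex-valued function at a boundary point. -/
def NTLimB (f : ℂ → Bicomplex) (ζ : ℂ) (L : Bicomplex) : Prop :=
  ∀ a : ℝ, 1 < a → Filter.Tendsto (fun z => bnorm (f z - L)) (nhdsWithin ζ (stolz ζ a)) (nhds 0)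

end Bicomplex

open Bicomplex

section Helpers

lemma wz_mul (f g : ℂ → ℂ) (z : ℂ) (hf : DifferentiableAt ℝ f z)
    (hg : DifferentiableAt ℝ g z) :
    wz (fun t => f t * g t) z = wz f z * g z + f z * wz g z := by
  simp only [wz, fderiv_fun_mul hf hg, ContinuousLinearMap.add_apply,
    ContinuousLinearMap.smul_apply, smul_eq_mul]
  ring

lemma wzbar_mul (f g : ℂ → ℂ) (z : ℂ) (hf : DifferentiableAt ℝ f z)
    (hg : DifferentiableAt ℝ g z) :
    wzbar (fun t => f t * g t) z = wzbar f z * g z + f z * wzbar g z := by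
  simp only [wzbar, fderiv_fun_mul hf hg, ContinuousLinearMap.add_apply,
    ContinuousLinearMap.smul_apply, smul_eq_mul]
  ring

lemma wz_const_mul (c : ℂ) (f : ℂ → ℂ) (z : ℂ) (hf : DifferentiableAt ℝ f z) :
    wz (fun t => c * f t) z = c * wz f z := by
  simp only [wz, fderiv_const_mul hf, ContinuousLinearMap.smul_apply, smul_eq_mul]; ring

lemma wzbar_const_mul (c : ℂ) (f : ℂ → ℂ) (z : ℂ) (hf : DifferentiableAt ℝ f z) :
    wzbar (fun t => c * f t) z = c * wzbar f z := by
  simp only [wzbar, fderiv_const_mul hf, ContinuousLinearMap.smul_apply, smul_eq_mul]; ring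

lemma fderiv_conj' (z : ℂ) : fderiv ℝ (fun t : ℂ => (starRingEnd ℂ) t) z
    = (Complex.conjCLE : ℂ →L[ℝ] ℂ) := (Complex.conjCLE : ℂ →L[ℝ] ℂ).fderiv

lemma diff_conj (z : ℂ) : DifferentiableAt ℝ (fun t : ℂ => (starRingEnd ℂ) t) z :=
  Complex.conjCLE.differentiable.differentiableAt

lemma diff_conj_pow (m : ℕ) (z : ℂ) :
    DifferentiableAt ℝ (fun t : ℂ => (starRingEnd ℂ) t ^ m) z :=
  (diff_conj z).pow m

lemma wz_conj (z : ℂ) : wz (fun t : ℂ => (starRingEnd ℂ) t) z = 0 := by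
  simp [wz, fderiv_conj', Complex.conjCLE_apply]

lemma wzbar_conj (z : ℂ) : wzbar (fun t : ℂ => (starRingEnd ℂ) t) z = 1 := by
  simp [wzbar, fderiv_conj', Complex.conjCLE_apply]

lemma wz_conj_pow (m : ℕ) (z : ℂ) :
    wz (fun t : ℂ => (starRingEnd ℂ) t ^ m) z = 0 := by
  induction m with
  | zero => simp [wz]
  | succ m ih =>
    have h : (fun t : ℂ => (starRingEnd ℂ) t ^ (m+1)) =
        (fun t : ℂ => (starRingEnd ℂ) t ^ m * (starRingEnd ℂ) t) := by
      funext t; ring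
    rw [h, wz_mul _ _ _ (diff_conj_pow m z) (diff_conj z), ih, wz_conj]; ring

lemma wzbar_conj_pow (m : ℕ) (z : ℂ) :
    wzbar (fun t : ℂ => (starRingEnd ℂ) t ^ (m+1)) z
      = (m+1) * (starRingEnd ℂ) z ^ m := by
  induction m with
  | zero => simpa using wzbar_conj z
  | succ m ih =>
    have h : (fun t : ℂ => (starRingEnd ℂ) t ^ (m+2)) =
        (fun t : ℂ => (starRingEnd ℂ) t ^ (m+1) * (starRingEnd ℂ) t) := by
      funext t; ring
    rw [h, wzbar_mul _ _ _ (diff_conj_pow (m+1) z) (diff_conj z), ih, wzbar_conj]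
    push_cast; ring

lemma wzbar_sum {ι : Type*} (s : Finset ι) (f : ι → ℂ → ℂ) (z : ℂ)
    (h : ∀ i ∈ s, DifferentiableAt ℝ (f i) z) :
    wzbar (fun t => ∑ i ∈ s, f i t) z = ∑ i ∈ s, wzbar (f i) z := by
  simp only [wzbar, fderiv_fun_sum h, ContinuousLinearMap.sum_apply, Finset.sum_div,
    Finset.mul_sum, Finset.sum_add_distrib]
  rw [← Finset.sum_add_distrib, Finset.sum_div]

lemma wz_sum {ι : Type*} (s : Finset ι) (f : ι → ℂ → ℂ) (z : ℂ)
    (h : ∀ i ∈ s, DifferentiableAt ℝ (f i) z) :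
    wz (fun t => ∑ i ∈ s, f i t) z = ∑ i ∈ s, wz (f i) z := by
  simp only [wz, fderiv_fun_sum h, ContinuousLinearMap.sum_apply, Finset.sum_sub_distrib,
    Finset.sum_div, Finset.mul_sum]
  rw [← Finset.sum_sub_distrib, Finset.sum_div]

lemma belOp_congr (μ : ℂ → ℂ) (f g : ℂ → ℂ) (z : ℂ) (h : f =ᶠ[nhds z] g) :
    belOp μ f z = belOp μ g z := by
  simp only [belOp, wz, wzbar, h.fderiv_eq]

end Helpers


theorem stmt12 (n : ℕ) (hn : 1 ≤ n) (c : ℝ) (hc : c < 1) (μ : ℂ → ℂ)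
    (hμs : ContDiffOn ℝ (n - 1 : ℕ) μ (ball (0:ℂ) 1))
    (hμb : ∀ z ∈ ball (0:ℂ) 1, ‖μ z‖ ≤ c)
    (wk : ℕ → ℂ → ℂ)
    (hks : ∀ k < n, ContDiffOn ℝ (n : ℕ) (wk k) (ball (0:ℂ) 1))
    (hkb : ∀ k < n, ∀ z ∈ ball (0:ℂ) 1, wzbar (wk k) z = μ z * wz (wk k) z) :
    ∀ k < n, ∀ z ∈ ball (0:ℂ) 1,
      (belOp μ)^[k] (fun t => ∑ m ∈ Finset.range n, (starRingEnd ℂ t) ^ m * wk m t) z =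
        ∑ i ∈ Finset.Ico k n,
          ((i.factorial : ℂ) / ((i - k).factorial : ℂ)) * (starRingEnd ℂ z) ^ (i - k) * wk i z := by
  intro k
  induction k with
  | zero =>
    intro _ z _
    simp only [Function.iterate_zero, id_eq, ← Finset.range_eq_Ico]
    refine Finset.sum_congr rfl fun i _ => ?_
    rw [Nat.sub_zero, div_self (Nat.cast_ne_zero.2 i.factorial_ne_zero), one_mul]
  | succ k ih =>
    intro hk1 z hz
    have hk : k < n := Nat.lt_of_succ_lt hk1
    have hdw : ∀ i, i < n → DifferentiableAt ℝ (wk i) z := fun i hi =>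
      ((hks i hi).contDiffAt (isOpen_ball.mem_nhds hz)).differentiableAt
        (by exact_mod_cast (show n ≠ 0 by omega))
    set g : ℂ → ℂ := fun t => ∑ i ∈ Finset.Ico k n,
      ((i.factorial : ℂ) / ((i - k).factorial : ℂ)) * (starRingEnd ℂ t) ^ (i - k) * wk i t
      with hg
    have heq : (belOp μ)^[k] (fun t => ∑ m ∈ Finset.range n,
        (starRingEnd ℂ t) ^ m * wk m t) =ᶠ[nhds z] g :=
      Filter.eventually_of_mem (isOpen_ball.mem_nhds hz) (fun t ht => ih hk t ht)
    rw [Function.iterate_succ_apply', belOp_congr μ _ g z heq]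
    -- rewrite g into fully associated form
    have hg2 : g = fun t => ∑ i ∈ Finset.Ico k n,
        ((i.factorial : ℂ) / ((i - k).factorial : ℂ)) *
          ((starRingEnd ℂ t) ^ (i - k) * wk i t) := by
      funext t; exact Finset.sum_congr rfl fun i _ => by ring
    have hdiff : ∀ i ∈ Finset.Ico k n, DifferentiableAt ℝ
        (fun t => ((i.factorial : ℂ) / ((i - k).factorial : ℂ)) *
          ((starRingEnd ℂ t) ^ (i - k) * wk i t)) z := by
      intro i hi
      exact (differentiableAt_const _).mul
        ((diff_conj_pow _ z).mul (hdw i (Finset.mem_Ico.1 hi).2))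
    have hterm : ∀ i ∈ Finset.Ico k n,
        wzbar (fun t => ((i.factorial : ℂ) / ((i - k).factorial : ℂ)) *
            ((starRingEnd ℂ t) ^ (i - k) * wk i t)) z
          - μ z * wz (fun t => ((i.factorial : ℂ) / ((i - k).factorial : ℂ)) *
            ((starRingEnd ℂ t) ^ (i - k) * wk i t)) z
        = ((i.factorial : ℂ) / ((i - k).factorial : ℂ)) *
            (wzbar (fun t : ℂ => (starRingEnd ℂ) t ^ (i - k)) z * wk i z) := by
      intro i hi
      have hiw := hdw i (Finset.mem_Ico.1 hi).2
      rw [wzbar_const_mul _ (fun t => (starRingEnd ℂ t) ^ (i - k) * wk i t) _ ((diff_conj_pow _ z).mul hiw),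
          wz_const_mul _ (fun t => (starRingEnd ℂ t) ^ (i - k) * wk i t) _ ((diff_conj_pow _ z).mul hiw),
          wzbar_mul _ _ _ (diff_conj_pow _ z) hiw,
          wz_mul _ _ _ (diff_conj_pow _ z) hiw,
          wz_conj_pow, hkb i (Finset.mem_Ico.1 hi).2 z hz]
      ring
    have hbel : belOp μ g z = ∑ i ∈ Finset.Ico k n,
        ((i.factorial : ℂ) / ((i - k).factorial : ℂ)) *
          (wzbar (fun t : ℂ => (starRingEnd ℂ) t ^ (i - k)) z * wk i z) := by
      rw [hg2]
      simp only [belOp]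
      rw [wzbar_sum _ _ _ hdiff, wz_sum _ _ _ hdiff, Finset.mul_sum,
        ← Finset.sum_sub_distrib]
      exact Finset.sum_congr rfl hterm
    rw [hbel, Finset.sum_eq_sum_Ico_succ_bot hk]
    have hzero : wzbar (fun t : ℂ => (starRingEnd ℂ) t ^ (k - k)) z = 0 := by
      simp [Nat.sub_self, wzbar, fderiv_const]
    rw [hzero]
    simp only [mul_zero, zero_mul, zero_add]
    refine Finset.sum_congr rfl fun i hi => ?_
    obtain ⟨hi1, hi2⟩ := Finset.mem_Ico.1 hi
    obtain ⟨j, hj⟩ : ∃ j, i - k = j + 1 :=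
      ⟨i - (k + 1), by omega⟩
    have hj2 : i - (k + 1) = j := by omega
    rw [hj, hj2, wzbar_conj_pow]
    have h1 : ((j + 1).factorial : ℂ) = (j + 1) * (j.factorial : ℂ) := by
      rw [Nat.factorial_succ]; push_cast; ring
    rw [h1]
    have hne1 : ((j : ℂ) + 1) ≠ 0 := Nat.cast_add_one_ne_zero j
    have hne2 : (j.factorial : ℂ) ≠ 0 := Nat.cast_ne_zero.2 j.factorial_ne_zero
    field_simp

end
end

section
/- Let μ ∈ W^{1,∞}(𝔻) be real-valued with ‖μ‖_{L^∞} ≤ c < 1, and define α := −(1/(1−μ²)) ∂̄μ. A C¹ function f : 𝔻 → 𝔹 solves the bicomplex conjugate Beltrami equation ∂̄f = μ ∂̄f̄ if and only if w := (1−μ²)^{-1/2}(f − μ f̄) solves the bicomplex Vekua equation ∂̄w = α w̄. Moreover the inverse transformation is f = (1−μ²)^{-1/2}(w + μ w̄). -/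
open Complex MeasureTheory Metric Set Filter

noncomputable section

open Bicomplex


private lemma keyS (μ : ℂ → ℝ) (z : ℂ) (hμd : DifferentiableAt ℝ μ z) (hx : 0 < 1 - μ z ^ 2) :
    HasFDerivAt (fun t => (Real.sqrt (1 - μ t ^ 2))⁻¹)
      ((μ z / (Real.sqrt (1 - μ z ^ 2))^3) • fderiv ℝ μ z) z := by
  have hμ' := hμd.hasFDerivAt
  have hq : 0 < Real.sqrt (1 - μ z ^ 2) := Real.sqrt_pos.mpr hx
  have hq2 : Real.sqrt (1 - μ z ^ 2) ^ 2 = 1 - μ z ^ 2 := Real.sq_sqrt hx.le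
  have h2 : HasFDerivAt (fun t => 1 - μ t ^ 2) ((-2 * μ z) • fderiv ℝ μ z) z := by
    have h3 := (hasFDerivAt_const (1:ℝ) z).sub (hμ'.mul hμ')
    have hfn : (fun t => 1 - μ t ^ 2) = fun t => 1 - μ t * μ t := by funext t; ring
    rw [hfn]
    refine HasFDerivAt.congr_fderiv h3 ?_
    ext v; simp; ring
  have hsq := (Real.hasDerivAt_sqrt hx.ne').comp_hasFDerivAt z h2
  have hinv := (hasDerivAt_inv hq.ne').comp_hasFDerivAt z hsq
  refine HasFDerivAt.congr_fderiv hinv ?_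
  ext v
  simp [smul_smul]
  field_simp
  left
  trivial

private lemma keyA (μ : ℂ → ℝ) (z : ℂ) (hμd : DifferentiableAt ℝ μ z) (hx : 0 < 1 - μ z ^ 2) :
    HasFDerivAt (fun t => (Real.sqrt (1 - μ t ^ 2))⁻¹ * (1 - μ t))
      ((-((1 - μ z) / (Real.sqrt (1 - μ z ^ 2))^3)) • fderiv ℝ μ z) z := by
  have hμ' := hμd.hasFDerivAt
  have hq : 0 < Real.sqrt (1 - μ z ^ 2) := Real.sqrt_pos.mpr hx
  have hq2 : Real.sqrt (1 - μ z ^ 2) ^ 2 = 1 - μ z ^ 2 := Real.sq_sqrt hx.le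
  have h1 : HasFDerivAt (fun t => 1 - μ t) ((0 : ℂ →L[ℝ] ℝ) - fderiv ℝ μ z) z :=
    (hasFDerivAt_const (1:ℝ) z).sub hμ'
  have h := (keyS μ z hμd hx).mul h1
  refine HasFDerivAt.congr_fderiv h ?_
  ext v
  simp [smul_smul]
  field_simp
  linear_combination (-(fderiv ℝ μ z v)) * hq2

private lemma keyB (μ : ℂ → ℝ) (z : ℂ) (hμd : DifferentiableAt ℝ μ z) (hx : 0 < 1 - μ z ^ 2) :
    HasFDerivAt (fun t => (Real.sqrt (1 - μ t ^ 2))⁻¹ * (1 + μ t))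
      (((1 + μ z) / (Real.sqrt (1 - μ z ^ 2))^3) • fderiv ℝ μ z) z := by
  have hμ' := hμd.hasFDerivAt
  have hq : 0 < Real.sqrt (1 - μ z ^ 2) := Real.sqrt_pos.mpr hx
  have hq2 : Real.sqrt (1 - μ z ^ 2) ^ 2 = 1 - μ z ^ 2 := Real.sq_sqrt hx.le
  have h1 : HasFDerivAt (fun t => 1 + μ t) ((0 : ℂ →L[ℝ] ℝ) + fderiv ℝ μ z) z :=
    (hasFDerivAt_const (1:ℝ) z).add hμ'
  have h := (keyS μ z hμd hx).mul h1
  refine HasFDerivAt.congr_fderiv h ?_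
  ext v
  simp [smul_smul]
  field_simp
  linear_combination (fderiv ℝ μ z v) * hq2

open Bicomplex

private lemma sub_z1' (u v : Bicomplex) : (u - v).z1 = u.z1 - v.z1 := by
  rw [sub_eq_add_neg, add_z1, neg_z1, ← sub_eq_add_neg]
private lemma sub_z2' (u v : Bicomplex) : (u - v).z2 = u.z2 - v.z2 := by
  rw [sub_eq_add_neg, add_z2, neg_z2, ← sub_eq_add_neg]

private lemma beq' (u v : Bicomplex) : u = v ↔ u.z1 = v.z1 ∧ u.z2 = v.z2 :=
  ⟨fun h => by rw [h]; exact ⟨rfl, rfl⟩, fun h => Bicomplex.ext' h.1 h.2⟩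

set_option maxHeartbeats 2000000 in
private lemma key (μ : ℂ → ℝ) (f : ℂ → Bicomplex) (z : ℂ)
    (hμd : DifferentiableAt ℝ μ z) (hm : |μ z| < 1)
    (hf1 : DifferentiableAt ℝ (fun t => (f t).z1) z)
    (hf2 : DifferentiableAt ℝ (fun t => (f t).z2) z) :
    (bdbar f z = ofC (μ z : ℂ) * bdbar (fun t => bconj (f t)) z) ↔
    (bdbar (fun t => ofC ((Real.sqrt (1 - μ t ^ 2))⁻¹ : ℂ)
            * (f t - ofC (μ t : ℂ) * bconj (f t))) z
          = (-(ofC (((1 - μ z ^ 2)⁻¹ : ℝ) : ℂ)) * bdbar (fun t => ofC (μ t : ℂ)) z)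
            * bconj (ofC ((Real.sqrt (1 - μ z ^ 2))⁻¹ : ℂ)
              * (f z - ofC (μ z : ℂ) * bconj (f z)))) := by
  have hx : 0 < 1 - μ z ^ 2 := by
    have h := abs_lt.mp hm; nlinarith [h.1, h.2]
  have hq : 0 < Real.sqrt (1 - μ z ^ 2) := Real.sqrt_pos.mpr hx
  have hq2 : Real.sqrt (1 - μ z ^ 2) ^ 2 = 1 - μ z ^ 2 := Real.sq_sqrt hx.le
  have hw1f : (fun t => (ofC ((Real.sqrt (1 - μ t ^ 2))⁻¹ : ℂ)
        * (f t - ofC (μ t : ℂ) * bconj (f t))).z1)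
      = fun t => (Complex.ofRealCLM ((Real.sqrt (1 - μ t ^ 2))⁻¹ * (1 - μ t))) * (f t).z1 := by
    funext t
    simp [ofC, bconj, sub_z1']
    push_cast
    ring
  have hw2f : (fun t => (ofC ((Real.sqrt (1 - μ t ^ 2))⁻¹ : ℂ)
        * (f t - ofC (μ t : ℂ) * bconj (f t))).z2)
      = fun t => (Complex.ofRealCLM ((Real.sqrt (1 - μ t ^ 2))⁻¹ * (1 + μ t))) * (f t).z2 := by
    funext t
    simp [ofC, bconj, sub_z2']
    push_cast
    ring
  have hD1 : fderiv ℝ (fun t => (ofC ((Real.sqrt (1 - μ t ^ 2))⁻¹ : ℂ)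
        * (f t - ofC (μ t : ℂ) * bconj (f t))).z1) z
      = (Complex.ofRealCLM ((Real.sqrt (1 - μ z ^ 2))⁻¹ * (1 - μ z))) • fderiv ℝ (fun t => (f t).z1) z
        + (f z).z1 • (Complex.ofRealCLM.comp
            ((-((1 - μ z) / (Real.sqrt (1 - μ z ^ 2))^3)) • fderiv ℝ μ z)) := by
    rw [hw1f]
    exact ((Complex.ofRealCLM.hasFDerivAt.comp z (keyA μ z hμd hx)).mul hf1.hasFDerivAt).fderiv
  have hD2 : fderiv ℝ (fun t => (ofC ((Real.sqrt (1 - μ t ^ 2))⁻¹ : ℂ)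
        * (f t - ofC (μ t : ℂ) * bconj (f t))).z2) z
      = (Complex.ofRealCLM ((Real.sqrt (1 - μ z ^ 2))⁻¹ * (1 + μ z))) • fderiv ℝ (fun t => (f t).z2) z
        + (f z).z2 • (Complex.ofRealCLM.comp
            (((1 + μ z) / (Real.sqrt (1 - μ z ^ 2))^3) • fderiv ℝ μ z)) := by
    rw [hw2f]
    exact ((Complex.ofRealCLM.hasFDerivAt.comp z (keyB μ z hμd hx)).mul hf2.hasFDerivAt).fderiv
  have hDg1 : fderiv ℝ (fun t => (ofC (μ t : ℂ)).z1) z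
      = Complex.ofRealCLM.comp (fderiv ℝ μ z) :=
    (Complex.ofRealCLM.hasFDerivAt.comp z hμd.hasFDerivAt).fderiv
  have hDg2 : fderiv ℝ (fun t => (ofC (μ t : ℂ)).z2) z = 0 :=
    (hasFDerivAt_const (0:ℂ) z).fderiv
  have hDb1 : fderiv ℝ (fun t => (bconj (f t)).z1) z = fderiv ℝ (fun t => (f t).z1) z := rfl
  have hDb2 : fderiv ℝ (fun t => (bconj (f t)).z2) z
      = -(fderiv ℝ (fun t => (f t).z2) z) := by
    have h : (fun t => (bconj (f t)).z2) = fun t => -((f t).z2) := rfl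
    rw [h, fderiv_fun_neg]
  rw [beq', beq']
  simp only [bdbar, dx, dy]
  rw [hD1, hD2, hDg1, hDg2, hDb1, hDb2]
  simp only [ofC, bconj, j, mul_z1, mul_z2, add_z1, add_z2, sub_z1', sub_z2', neg_z1, neg_z2,
    ContinuousLinearMap.add_apply, ContinuousLinearMap.smul_apply, ContinuousLinearMap.comp_apply,
    ContinuousLinearMap.neg_apply, ContinuousLinearMap.zero_apply, Complex.ofRealCLM_apply,
    smul_eq_mul]
  push_cast
  set M := ((μ z : ℝ) : ℂ) with hM
  set K := ((Real.sqrt (1 - μ z ^ 2) : ℝ) : ℂ) with hK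
  set P := (fderiv ℝ (fun t => (f t).z1) z) 1 with hP
  set Q := (fderiv ℝ (fun t => (f t).z1) z) Complex.I with hQ
  set R := (fderiv ℝ (fun t => (f t).z2) z) 1 with hR
  set S := (fderiv ℝ (fun t => (f t).z2) z) Complex.I with hS
  set g1 := (((fderiv ℝ μ z) 1 : ℝ) : ℂ) with hg1
  set gI := (((fderiv ℝ μ z) Complex.I : ℝ) : ℂ) with hgI
  set F1 := (f z).z1 with hF1
  set F2 := (f z).z2 with hF2
  have hq0 : K ≠ 0 := by rw [hK]; exact_mod_cast hq.ne'
  have hq2c : K ^ 2 = 1 - M ^ 2 := by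
    rw [hK, hM]; exact_mod_cast congrArg (fun r : ℝ => (r : ℂ)) hq2
  have hmm2 : (1 : ℂ) - M ^ 2 ≠ 0 := by
    rw [hM]
    have h : ((1 - μ z ^ 2 : ℝ) : ℂ) ≠ 0 := by exact_mod_cast hx.ne'
    push_cast at h
    exact h
  have hfac : (4 : ℂ) * (1 - M ^ 2) ^ 2 * K ^ 5 ≠ 0 :=
    mul_ne_zero (mul_ne_zero (by norm_num) (pow_ne_zero _ hmm2)) (pow_ne_zero _ hq0)
  constructor
  · rintro ⟨h1, h2⟩
    have h5 : (1 - M) * P - (1 + M) * S = 0 := by linear_combination 2 * h1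
    have h6 : (1 + M) * R + (1 - M) * Q = 0 := by linear_combination 2 * h2
    constructor
    · field_simp [hmm2]
      linear_combination ((1-M^2)*K^2) * h5
        + (F1*(1-M)*g1 + F2*(1+M)*gI) * hq2c
    · field_simp [hmm2]
      linear_combination ((1-M^2)*K^2) * h6
        - (F2*(1+M)*g1 - F1*(1-M)*gI) * hq2c
  · rintro ⟨h1, h2⟩
    field_simp [hmm2] at h1 h2
    have h5 : (1 - M) * P - (1 + M) * S = 0 := by
      have h4 : (4*(1-M^2)^2*K^5) * ((1 - M) * P - (1 + M) * S) = 0 := by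
        linear_combination (4*(1-M^2)*K^3) * h1 - (4*K^3*(1-M^2)*(F1*(1-M)*g1 + F2*(1+M)*gI)) * hq2c
      exact (mul_eq_zero.mp h4).resolve_left hfac
    have h6 : (1 + M) * R + (1 - M) * Q = 0 := by
      have h4 : (4*(1-M^2)^2*K^5) * ((1 + M) * R + (1 - M) * Q) = 0 := by
        linear_combination (4*(1-M^2)*K^3) * h2 + (4*K^3*(1-M^2)*(F2*(1+M)*g1 - F1*(1-M)*gI)) * hq2c
      exact (mul_eq_zero.mp h4).resolve_left hfac
    exact ⟨by linear_combination h5/2, by linear_combination h6/2⟩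
theorem stmt17 (c : ℝ) (hc : c < 1) (μ : ℂ → ℝ)
    (hμs : ContDiffOn ℝ 1 μ (ball (0:ℂ) 1))
    (hμb : ∀ z ∈ ball (0:ℂ) 1, |μ z| ≤ c)
    (f : ℂ → Bicomplex) (hf : ∀ z ∈ ball (0:ℂ) 1, BDiffAt f z) :
    ((∀ z ∈ ball (0:ℂ) 1,
        bdbar f z = ofC (μ z : ℂ) * bdbar (fun t => bconj (f t)) z) ↔
     (∀ z ∈ ball (0:ℂ) 1,
        bdbar (fun t => ofC ((Real.sqrt (1 - μ t ^ 2))⁻¹ : ℂ)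
            * (f t - ofC (μ t : ℂ) * bconj (f t))) z
          = (-(ofC (((1 - μ z ^ 2)⁻¹ : ℝ) : ℂ)) * bdbar (fun t => ofC (μ t : ℂ)) z)
            * bconj (ofC ((Real.sqrt (1 - μ z ^ 2))⁻¹ : ℂ)
              * (f z - ofC (μ z : ℂ) * bconj (f z))))) ∧
    (∀ z ∈ ball (0:ℂ) 1,
        f z = ofC ((Real.sqrt (1 - μ z ^ 2))⁻¹ : ℂ)
          * ((ofC ((Real.sqrt (1 - μ z ^ 2))⁻¹ : ℂ) * (f z - ofC (μ z : ℂ) * bconj (f z)))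
            + ofC (μ z : ℂ)
              * bconj (ofC ((Real.sqrt (1 - μ z ^ 2))⁻¹ : ℂ)
                * (f z - ofC (μ z : ℂ) * bconj (f z)))) ) := by
  have hpt : ∀ z ∈ ball (0:ℂ) 1,
      ((bdbar f z = ofC (μ z : ℂ) * bdbar (fun t => bconj (f t)) z) ↔
       (bdbar (fun t => ofC ((Real.sqrt (1 - μ t ^ 2))⁻¹ : ℂ)
            * (f t - ofC (μ t : ℂ) * bconj (f t))) z
          = (-(ofC (((1 - μ z ^ 2)⁻¹ : ℝ) : ℂ)) * bdbar (fun t => ofC (μ t : ℂ)) z)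
            * bconj (ofC ((Real.sqrt (1 - μ z ^ 2))⁻¹ : ℂ)
              * (f z - ofC (μ z : ℂ) * bconj (f z))))) := by
    intro z hz
    have hμd : DifferentiableAt ℝ μ z :=
      (hμs.contDiffAt (isOpen_ball.mem_nhds hz)).differentiableAt (by norm_num)
    exact key μ f z hμd (lt_of_le_of_lt (hμb z hz) hc) (hf z hz).1 (hf z hz).2
  constructor
  · constructor
    · intro H z hz; exact (hpt z hz).mp (H z hz)
    · intro H z hz; exact (hpt z hz).mpr (H z hz)
  · intro z hz
    have hm : |μ z| < 1 := lt_of_le_of_lt (hμb z hz) hc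
    have hx : 0 < 1 - μ z ^ 2 := by have h := abs_lt.mp hm; nlinarith [h.1, h.2]
    have hq : 0 < Real.sqrt (1 - μ z ^ 2) := Real.sqrt_pos.mpr hx
    have hq2 : Real.sqrt (1 - μ z ^ 2) ^ 2 = 1 - μ z ^ 2 := Real.sq_sqrt hx.le
    have hq0 : ((Real.sqrt (1 - μ z ^ 2) : ℝ) : ℂ) ≠ 0 := by exact_mod_cast hq.ne'
    have hq2c : ((Real.sqrt (1 - μ z ^ 2) : ℝ) : ℂ) ^ 2 = 1 - ((μ z : ℝ) : ℂ) ^ 2 := by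
      exact_mod_cast congrArg (fun r : ℝ => (r : ℂ)) hq2
    refine Bicomplex.ext' ?_ ?_
    · simp only [ofC, bconj, mul_z1, mul_z2, add_z1, add_z2, sub_z1', sub_z2', neg_z1, neg_z2]
      field_simp
      linear_combination (f z).z1 * hq2c
    · simp only [ofC, bconj, mul_z1, mul_z2, add_z1, add_z2, sub_z1', sub_z2', neg_z1, neg_z2]
      field_simp
      linear_combination (f z).z2 * hq2c

end
end
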